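/- Let d be a cube-free positive integer (v_p(d) ≤ 2 for every prime p) with Ω(d) ≥ 2 and let q ≥ 7 be a prime with q ∤ d. Then Mref₄(d)/M₄(d) ≥ Mref₄(d·q²)/M₄(d·q²). -/
import Mathlib


open Real Finset

/-- The lower bound `M(d)` for the mass of a strongly square free quaternary lattice of
determinant `d` (Lemma 3.3(b)). -/
noncomputable def M4 (d : ℕ) : ℝ :=
  (1 / 2160) *
    (∏ p ∈ d.primeFactors.filter fun p => p ≠ 2 ∧ d.factorization p = 2,
      ((1 : ℝ) / 2) * (p : ℝ) ^ 2 * (((p : ℝ) - 1) / ((p : ℝ) + 1))) *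
    (∏ p ∈ d.primeFactors.filter fun p => p ≠ 2 ∧ d.factorization p = 1,
      ((1 : ℝ) / 2) * (p : ℝ) ^ ((3 : ℝ) / 2))

/-- The upper bound `Mref(d)` for the reflective part of the mass of a strongly square free
quaternary lattice of determinant `d` (Lemma 3.5(b)); `Ω` is realised by
`Nat.primeFactorsList.length` and `ω` by `Nat.primeFactors.card`. -/
noncomputable def Mref4 (d : ℕ) : ℝ :=
  3 * (4 : ℝ) ^ d.primeFactorsList.length / 16 +
    2 * (3 : ℝ) ^ d.primeFactorsList.length / 32 +
    (2 : ℝ) ^ d.primeFactorsList.length / 72 +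
    3 * (2 : ℝ) ^ d.primeFactorsList.length / 96 + 53 / 5760 +
    ∑ x ∈ d.divisors,
      (2 : ℝ) ^ (x.primeFactors.card + 1) * (1 / 4) * (2 / π) * (1 + Real.log x / 2) *
        (∏ p ∈ x.primeFactors.filter fun p => d.factorization p = 2,
          (2 * (p : ℝ)) / (2 * (p : ℝ) - 1)) *
        (∏ p ∈ x.primeFactors.filter fun p => d.factorization p = 1,
          ((1 : ℝ) / 2) * Real.sqrt p)

lemma fact_ne {d q p : ℕ} (hd : d ≠ 0) (hq : q.Prime) (hp : p ≠ q) :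
    (d * q ^ 2).factorization p = d.factorization p := by
  rw [Nat.factorization_mul hd (pow_ne_zero _ hq.ne_zero)]
  simp [Nat.factorization_pow, hq.factorization, Finsupp.single_apply, Ne.symm hp]

lemma fact_self {d q : ℕ} (hd : d ≠ 0) (hq : q.Prime) (hqd : ¬ q ∣ d) :
    (d * q ^ 2).factorization q = 2 := by
  rw [Nat.factorization_mul hd (pow_ne_zero _ hq.ne_zero)]
  simp [Nat.factorization_pow, hq.factorization, Nat.factorization_eq_zero_of_not_dvd hqd]

noncomputable def qterm (D x : ℕ) : ℝ :=
  (2 : ℝ) ^ (x.primeFactors.card + 1) * (1 / 4) * (2 / π) * (1 + Real.log x / 2) *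
    (∏ p ∈ x.primeFactors.filter fun p => D.factorization p = 2,
      (2 * (p : ℝ)) / (2 * (p : ℝ) - 1)) *
    (∏ p ∈ x.primeFactors.filter fun p => D.factorization p = 1,
      ((1 : ℝ) / 2) * Real.sqrt p)

lemma prod2_nonneg (D x : ℕ) : 0 ≤ ∏ p ∈ x.primeFactors.filter
    (fun p => D.factorization p = 2), (2 * (p : ℝ)) / (2 * (p : ℝ) - 1) := by
  refine Finset.prod_nonneg fun p hp => ?_
  have hp2 : 2 ≤ p := (Nat.prime_of_mem_primeFactors (Finset.mem_of_mem_filter p hp)).two_le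
  have : (2:ℝ) ≤ (p:ℝ) := by exact_mod_cast hp2
  have h1 : (0:ℝ) < 2 * (p:ℝ) - 1 := by linarith
  positivity

lemma prod1_nonneg (D x : ℕ) : 0 ≤ ∏ p ∈ x.primeFactors.filter
    (fun p => D.factorization p = 1), ((1:ℝ) / 2) * Real.sqrt p := by
  refine Finset.prod_nonneg fun p hp => ?_
  positivity

lemma qterm_nonneg (D x : ℕ) (hx : x ≠ 0) : 0 ≤ qterm D x := by
  have h1 : (0:ℝ) ≤ 1 + Real.log x / 2 := by
    have : (0:ℝ) ≤ Real.log x := Real.log_nonneg (by exact_mod_cast Nat.one_le_iff_ne_zero.mpr hx)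
    linarith
  have := prod2_nonneg D x
  have := prod1_nonneg D x
  have := Real.pi_pos
  unfold qterm
  positivity

lemma qterm_congr {d q x : ℕ} (hd : d ≠ 0) (hq : q.Prime) (hqd : ¬ q ∣ d) (hx : x ∣ d) :
    qterm (d * q ^ 2) x = qterm d x := by
  have hne : ∀ p ∈ x.primeFactors, p ≠ q := fun p hp h =>
    hqd ((h ▸ Nat.dvd_of_mem_primeFactors hp).trans hx)
  unfold qterm
  rw [Finset.filter_congr (fun p hp => by
      simp only [fact_ne hd hq (hne p hp)] : ∀ p ∈ x.primeFactors,
        (((d * q ^ 2).factorization p = 2) ↔ (d.factorization p = 2))),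
    Finset.filter_congr (fun p hp => by
      simp only [fact_ne hd hq (hne p hp)] : ∀ p ∈ x.primeFactors,
        (((d * q ^ 2).factorization p = 1) ↔ (d.factorization p = 1)))]

lemma numeric_key {t : ℝ} (ht : 7 ≤ t) :
    (4 * t / (2 * t - 1)) * (2 + (3 / 2) * Real.log t)
      ≤ t ^ 2 * ((t - 1) / (t + 1)) / 2 - 1 := by
  have ht0 : (0:ℝ) < t := by linarith
  have h21 : (0:ℝ) < 2 * t - 1 := by linarith
  have hs0 : 0 ≤ Real.sqrt t := Real.sqrt_nonneg t
  have hs2 : Real.sqrt t ^ 2 = t := Real.sq_sqrt ht0.le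
  have hsge : (13/5 : ℝ) ≤ Real.sqrt t := by nlinarith [hs2, hs0]
  have hlog : Real.log t ≤ 2 * (Real.sqrt t - 1) := by
    have h1 : Real.log (Real.sqrt t) ≤ Real.sqrt t - 1 :=
      Real.log_le_sub_one_of_pos (Real.sqrt_pos.mpr ht0)
    have h2 : Real.log (Real.sqrt t) = Real.log t / 2 := Real.log_sqrt ht0.le
    linarith
  have hlog0 : 0 ≤ Real.log t := Real.log_nonneg (by linarith)
  have hA : 4 * t / (2 * t - 1) ≤ 28 / 13 := by
    rw [div_le_iff₀ h21]; linarith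
  have hL : 2 + (3 / 2) * Real.log t ≤ 3 * Real.sqrt t - 1 := by linarith
  have step1 : (4 * t / (2 * t - 1)) * (2 + (3 / 2) * Real.log t)
      ≤ (28 / 13) * (3 * Real.sqrt t - 1) := by
    have h0 : (0:ℝ) ≤ 2 + (3 / 2) * Real.log t := by linarith
    have h4 : (0:ℝ) ≤ 4 * t / (2 * t - 1) := by positivity
    nlinarith
  have step2 : (28 / 13) * (3 * Real.sqrt t - 1) ≤ 3 * t ^ 2 / 8 - 1 := by
    nlinarith [hs2, hsge, sq_nonneg (Real.sqrt t - 13/5), sq_nonneg (Real.sqrt t)]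
  have step3 : 3 * t ^ 2 / 8 - 1 ≤ t ^ 2 * ((t - 1) / (t + 1)) / 2 - 1 := by
    have ht1 : (0:ℝ) < t + 1 := by linarith
    have h34 : (3/4 : ℝ) ≤ (t - 1) / (t + 1) := by
      rw [le_div_iff₀ ht1]; linarith
    nlinarith [sq_nonneg t]
  linarith

lemma qterm_bound {d q x : ℕ} (hd : d ≠ 0) (hq : q.Prime) (hq7 : 7 ≤ q) (hqd : ¬ q ∣ d)
    (hx : x ∣ d) :
    qterm (d * q ^ 2) (x * q) + qterm (d * q ^ 2) (x * q ^ 2)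
      ≤ ((q : ℝ) ^ 2 * (((q : ℝ) - 1) / ((q : ℝ) + 1)) / 2 - 1) * qterm d x := by
  have hx0 : x ≠ 0 := fun h => hd (by simpa [h] using hx)
  have hqx : ¬ q ∣ x := fun h => hqd (h.trans hx)
  have hqpf : q ∉ x.primeFactors := fun h => hqx (Nat.dvd_of_mem_primeFactors h)
  have hne : ∀ p ∈ x.primeFactors, p ≠ q := fun p hp h => hqpf (h ▸ hp)
  have f2 : (d * q ^ 2).factorization q = 2 := fact_self hd hq hqd
  have pf1 : (x * q).primeFactors = insert q x.primeFactors := by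
    rw [Nat.primeFactors_mul hx0 hq.ne_zero, hq.primeFactors]; ext p; simp [or_comm]
  have pf2 : (x * q ^ 2).primeFactors = insert q x.primeFactors := by
    rw [Nat.primeFactors_mul hx0 (pow_ne_zero _ hq.ne_zero),
      Nat.primeFactors_pow _ (by norm_num : (2:ℕ) ≠ 0), hq.primeFactors]
    ext p; simp [or_comm]
  unfold qterm
  rw [pf1, pf2]
  rw [Finset.filter_insert, Finset.filter_insert,
    if_pos f2, if_neg (by simp [f2] : ¬ (d * q ^ 2).factorization q = 1)]
  rw [Finset.filter_congr (fun p hp => by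
      simp only [fact_ne hd hq (hne p hp)] : ∀ p ∈ x.primeFactors,
        (((d * q ^ 2).factorization p = 2) ↔ (d.factorization p = 2))),
    Finset.filter_congr (fun p hp => by
      simp only [fact_ne hd hq (hne p hp)] : ∀ p ∈ x.primeFactors,
        (((d * q ^ 2).factorization p = 1) ↔ (d.factorization p = 1)))]
  rw [Finset.prod_insert (fun h => hqpf (Finset.mem_of_mem_filter q h)),
    Finset.card_insert_of_notMem hqpf]
  have hlogq : Real.log ((x * q : ℕ) : ℝ) = Real.log x + Real.log q := by
    push_cast
    rw [Real.log_mul (by exact_mod_cast hx0) (by exact_mod_cast hq.ne_zero)]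
  have hlogq2 : Real.log ((x * q ^ 2 : ℕ) : ℝ) = Real.log x + 2 * Real.log q := by
    push_cast
    rw [Real.log_mul (by exact_mod_cast hx0) (by positivity),
      Real.log_pow]
    push_cast; ring
  rw [hlogq, hlogq2]
  -- now a pure real inequality
  set n := x.primeFactors.card with hn
  set K2 := ∏ p ∈ x.primeFactors.filter (fun p => d.factorization p = 2),
    (2 * (p : ℝ)) / (2 * (p : ℝ) - 1) with hK2
  set K1 := ∏ p ∈ x.primeFactors.filter (fun p => d.factorization p = 1),
    ((1:ℝ) / 2) * Real.sqrt p with hK1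
  have hK2n : 0 ≤ K2 := prod2_nonneg d x
  have hK1n : 0 ≤ K1 := prod1_nonneg d x
  have hpi := Real.pi_pos
  have hlx : 0 ≤ Real.log x := Real.log_nonneg (by exact_mod_cast Nat.one_le_iff_ne_zero.mpr hx0)
  set t : ℝ := (q : ℝ) with ht
  have ht7 : (7:ℝ) ≤ t := by rw [ht]; exact_mod_cast hq7
  have h21 : (0:ℝ) < 2 * t - 1 := by linarith
  have hL0 : 0 ≤ Real.log t := Real.log_nonneg (by linarith)
  have key := numeric_key ht7
  set L := Real.log t with hLdef
  set lx := Real.log x with hlxdef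
  set K : ℝ := (2:ℝ) ^ (n + 1) * (1 / 4) * (2 / π) * K2 * K1 with hKdef
  have hKn : 0 ≤ K := by positivity
  have key2 : (4 * t / (2 * t - 1)) * (2 + lx + (3 / 2) * L)
      ≤ (t ^ 2 * ((t - 1) / (t + 1)) / 2 - 1) * (1 + lx / 2) := by
    have hA2 : 2 * (4 * t / (2 * t - 1)) ≤ t ^ 2 * ((t - 1) / (t + 1)) / 2 - 1 := by
      nlinarith [key, hL0, div_nonneg (by linarith : (0:ℝ) ≤ 4 * t) h21.le]
    nlinarith [mul_le_mul_of_nonneg_right hA2 (by linarith : (0:ℝ) ≤ lx / 2), key]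
  calc (2:ℝ) ^ (n + 1 + 1) * (1 / 4) * (2 / π) * (1 + (lx + L) / 2) *
        ((2 * t / (2 * t - 1)) * K2) * K1 +
      (2:ℝ) ^ (n + 1 + 1) * (1 / 4) * (2 / π) * (1 + (lx + 2 * L) / 2) *
        ((2 * t / (2 * t - 1)) * K2) * K1
      = K * ((4 * t / (2 * t - 1)) * (2 + lx + (3 / 2) * L)) := by
        rw [hKdef]; ring
    _ ≤ K * ((t ^ 2 * ((t - 1) / (t + 1)) / 2 - 1) * (1 + lx / 2)) :=
        mul_le_mul_of_nonneg_left key2 hKn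
    _ = (t ^ 2 * ((t - 1) / (t + 1)) / 2 - 1) *
        ((2:ℝ) ^ (n + 1) * (1 / 4) * (2 / π) * (1 + lx / 2) * K2 * K1) := by
        rw [hKdef]; ring

lemma pf_mul {d q : ℕ} (hd : d ≠ 0) (hq : q.Prime) :
    (d * q ^ 2).primeFactors = insert q d.primeFactors := by
  rw [Nat.primeFactors_mul hd (pow_ne_zero _ hq.ne_zero),
    Nat.primeFactors_pow _ (by norm_num : (2:ℕ) ≠ 0), hq.primeFactors]
  ext p; simp [or_comm]

lemma sum_divisors_mul_prime_sq {d q : ℕ} (hd : d ≠ 0) (hq : q.Prime) (hqd : ¬ q ∣ d)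
    (f : ℕ → ℝ) :
    ∑ y ∈ (d * q ^ 2).divisors, f y
      = ∑ x ∈ d.divisors, (f x + f (x * q) + f (x * q ^ 2)) := by
  have h : ∀ x ∈ d.divisors, (f x + f (x * q) + f (x * q ^ 2))
      = ∑ i ∈ Finset.range 3, f (x * q ^ i) := by
    intro x hx
    rw [Finset.sum_range_succ, Finset.sum_range_succ, Finset.sum_range_one,
      pow_zero, pow_one, mul_one]
  rw [Finset.sum_congr rfl h, ← Finset.sum_product']
  refine (Finset.sum_nbij (fun p => p.1 * q ^ p.2) ?_ ?_ ?_ ?_).symm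
  · rintro ⟨x, i⟩ hp
    simp only [Finset.mem_product, Nat.mem_divisors, Finset.mem_range] at hp
    refine Nat.mem_divisors.mpr ⟨mul_dvd_mul hp.1.1 (pow_dvd_pow q (by omega)), ?_⟩
    exact mul_ne_zero hd (pow_ne_zero _ hq.ne_zero)
  · rintro ⟨x, i⟩ hp ⟨x', i'⟩ hp' hxy
    simp only [Finset.coe_product, Set.mem_prod, Finset.mem_coe, Nat.mem_divisors,
      Finset.mem_range] at hp hp'
    have hx0 : x ≠ 0 := fun h => hd (by simpa [h] using hp.1.1)
    have hx'0 : x' ≠ 0 := fun h => hd (by simpa [h] using hp'.1.1)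
    have hqx : x.factorization q = 0 :=
      Nat.factorization_eq_zero_of_not_dvd (fun h => hqd (h.trans hp.1.1))
    have hqx' : x'.factorization q = 0 :=
      Nat.factorization_eq_zero_of_not_dvd (fun h => hqd (h.trans hp'.1.1))
    have hfac : (x * q ^ i).factorization q = (x' * q ^ i').factorization q := by
      simp only at hxy; rw [hxy]
    rw [Nat.factorization_mul hx0 (pow_ne_zero _ hq.ne_zero),
      Nat.factorization_mul hx'0 (pow_ne_zero _ hq.ne_zero)] at hfac
    simp only [Finsupp.add_apply, hqx, hqx', Nat.factorization_pow, Finsupp.smul_apply,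
      hq.factorization, Finsupp.single_eq_same, zero_add, smul_eq_mul, mul_one] at hfac
    have hi : i = i' := hfac
    subst hi
    have : x = x' := by
      have := hxy
      simp only at this
      exact Nat.eq_of_mul_eq_mul_right (pow_pos hq.pos i) this
    simp [this]
  · intro y hy
    simp only [Finset.mem_coe, Nat.mem_divisors] at hy
    obtain ⟨a, b, ha, hb, hab⟩ := Nat.dvd_mul.mp hy.1
    obtain ⟨i, hi2, rfl⟩ := (Nat.dvd_prime_pow hq).mp hb
    refine ⟨⟨a, i⟩, ?_, hab⟩
    simp only [Finset.coe_product, Set.mem_prod, Finset.mem_coe, Nat.mem_divisors,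
      Finset.mem_range]
    exact ⟨⟨ha, hd⟩, by omega⟩
  · intro p hp; rfl

lemma Mref4_eq (d : ℕ) : Mref4 d =
    3 * (4 : ℝ) ^ d.primeFactorsList.length / 16 +
    2 * (3 : ℝ) ^ d.primeFactorsList.length / 32 +
    (2 : ℝ) ^ d.primeFactorsList.length / 72 +
    3 * (2 : ℝ) ^ d.primeFactorsList.length / 96 + 53 / 5760 +
    ∑ x ∈ d.divisors, qterm d x := rfl

lemma M4_mul {d q : ℕ} (hd : d ≠ 0) (hq : q.Prime) (hq2 : q ≠ 2) (hqd : ¬ q ∣ d) :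
    M4 (d * q ^ 2) = M4 d * ((1/2) * (q:ℝ)^2 * (((q:ℝ)-1)/((q:ℝ)+1))) := by
  have hqpf : q ∉ d.primeFactors := fun h => hqd (Nat.dvd_of_mem_primeFactors h)
  have hne : ∀ p ∈ d.primeFactors, p ≠ q := fun p hp h => hqpf (h ▸ hp)
  unfold M4
  rw [pf_mul hd hq, Finset.filter_insert, Finset.filter_insert,
    if_pos ⟨hq2, fact_self hd hq hqd⟩, if_neg (by simp [fact_self hd hq hqd]),
    Finset.filter_congr (fun p hp => by
      simp only [fact_ne hd hq (hne p hp)] : ∀ p ∈ d.primeFactors,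
        ((p ≠ 2 ∧ (d * q ^ 2).factorization p = 2) ↔ (p ≠ 2 ∧ d.factorization p = 2))),
    Finset.filter_congr (fun p hp => by
      simp only [fact_ne hd hq (hne p hp)] : ∀ p ∈ d.primeFactors,
        ((p ≠ 2 ∧ (d * q ^ 2).factorization p = 1) ↔ (p ≠ 2 ∧ d.factorization p = 1))),
    Finset.prod_insert (fun h => hqpf (Finset.mem_of_mem_filter q h))]
  ring

lemma M4_pos (d : ℕ) : 0 < M4 d := by
  unfold M4
  refine mul_pos (mul_pos (by norm_num) (Finset.prod_pos fun p hp => ?_))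
    (Finset.prod_pos fun p hp => ?_)
  · have hmem := Finset.mem_filter.mp hp
    have hp3 : 3 ≤ p := by
      have := (Nat.prime_of_mem_primeFactors hmem.1).two_le
      omega
    have hp3' : (3:ℝ) ≤ (p:ℝ) := by exact_mod_cast hp3
    have h1 : (0:ℝ) < (p:ℝ) - 1 := by linarith
    have h2 : (0:ℝ) < (p:ℝ) + 1 := by linarith
    have h0 : (0:ℝ) < (p:ℝ) := by linarith
    positivity
  · have hmem := Finset.mem_filter.mp hp
    have hp2 : 2 ≤ p := (Nat.prime_of_mem_primeFactors hmem.1).two_le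
    have h0 : (0:ℝ) < (p:ℝ) := by exact_mod_cast Nat.lt_of_lt_of_le Nat.zero_lt_two hp2
    positivity

lemma omega_mul {d q : ℕ} (hd : d ≠ 0) (hq : q.Prime) :
    (d * q ^ 2).primeFactorsList.length = d.primeFactorsList.length + 2 := by
  rw [(Nat.perm_primeFactorsList_mul hd (pow_ne_zero 2 hq.ne_zero)).length_eq,
    List.length_append, hq.primeFactorsList_pow, List.length_replicate]

/-- Lemma 3.6(b), first part: appending a new squared prime `q² (q ≥ 7)` to a cube-free
determinant `d` with `Ω(d) ≥ 2` does not increase the ratio `Mref/M` in dimension 4. -/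
theorem ratio_le_append_prime_sq_dim4 (d : ℕ) (hd : 0 < d)
    (hcf : ∀ p : ℕ, p.Prime → d.factorization p ≤ 2)
    (hΩ : 2 ≤ d.primeFactorsList.length) (q : ℕ) (hq : q.Prime) (hq7 : 7 ≤ q)
    (hqd : ¬ q ∣ d) :
    Mref4 (d * q ^ 2) / M4 (d * q ^ 2) ≤ Mref4 d / M4 d := by
  have hd0 : d ≠ 0 := hd.ne'
  have hq2 : q ≠ 2 := by omega
  have ht7 : (7:ℝ) ≤ (q:ℝ) := by exact_mod_cast hq7
  have h34 : (3/4:ℝ) ≤ ((q:ℝ) - 1)/((q:ℝ) + 1) := by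
    rw [le_div_iff₀ (by linarith)]; linarith
  have hC16 : (16:ℝ) ≤ (q:ℝ)^2 * (((q:ℝ) - 1)/((q:ℝ) + 1))/2 := by nlinarith
  have main : Mref4 (d * q ^ 2) ≤ Mref4 d * ((q:ℝ)^2 * (((q:ℝ) - 1)/((q:ℝ) + 1))/2) := by
    rw [Mref4_eq, Mref4_eq, omega_mul hd0 hq,
      sum_divisors_mul_prime_sq hd0 hq hqd (qterm (d * q ^ 2))]
    have hsum : ∑ x ∈ d.divisors,
          (qterm (d * q ^ 2) x + qterm (d * q ^ 2) (x * q) + qterm (d * q ^ 2) (x * q ^ 2))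
        ≤ ((q:ℝ)^2 * (((q:ℝ) - 1)/((q:ℝ) + 1))/2) * ∑ x ∈ d.divisors, qterm d x := by
      rw [Finset.mul_sum]
      refine Finset.sum_le_sum fun x hx => ?_
      have hxd : x ∣ d := (Nat.mem_divisors.mp hx).1
      have h1 := qterm_congr hd0 hq hqd hxd
      have h2 := qterm_bound hd0 hq hq7 hqd hxd
      rw [h1]
      linarith [h2]
    set n := d.primeFactorsList.length with hn
    have p4 : (0:ℝ) ≤ (4:ℝ)^n := by positivity
    have p3 : (0:ℝ) ≤ (3:ℝ)^n := by positivity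
    have p2 : (0:ℝ) ≤ (2:ℝ)^n := by positivity
    have e4 : (4:ℝ)^(n+2) = 16 * 4^n := by ring
    have e3 : (3:ℝ)^(n+2) = 9 * 3^n := by ring
    have e2 : (2:ℝ)^(n+2) = 4 * 2^n := by ring
    rw [e4, e3, e2]
    nlinarith [hsum, hC16, p4, p3, p2]
  have hM := M4_pos d
  have hc' : (0:ℝ) < (1/2) * (q:ℝ)^2 * (((q:ℝ) - 1)/((q:ℝ) + 1)) := by nlinarith
  rw [M4_mul hd0 hq hq2 hqd, div_le_div_iff₀ (mul_pos hM hc') hM]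
  calc Mref4 (d * q ^ 2) * M4 d
      ≤ (Mref4 d * ((q:ℝ)^2 * (((q:ℝ) - 1)/((q:ℝ) + 1))/2)) * M4 d :=
        mul_le_mul_of_nonneg_right main hM.le
    _ = Mref4 d * (M4 d * ((1/2) * (q:ℝ)^2 * (((q:ℝ) - 1)/((q:ℝ) + 1)))) := by ring
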